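/- Let T be a tree of order n ≥ 2. Then PC(T) = n if and only if T is a star K_{1,n−1}. -/

import Mathlib

namespace PCPaper

variable {V : Type*}

/-- `S` is a dominating set of `G`. -/
def IsDomSet (G : SimpleGraph V) (S : Set V) : Prop :=
  ∀ v : V, v ∈ S ∨ ∃ u ∈ S, G.Adj u v

/-- `S` is a paired dominating set of `G`: a dominating set such that the subgraph of `G`
induced by `S` contains a perfect matching (a matching whose vertex set is exactly `S`). -/
def IsPairedDomSet (G : SimpleGraph V) (S : Set V) : Prop :=
  IsDomSet G S ∧ ∃ M : G.Subgraph, M.verts = S ∧ M.IsMatching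

/-- Disjoint sets `A`, `B`, neither a paired dominating set, whose union is one. -/
def PairedCoalition (G : SimpleGraph V) (A B : Set V) : Prop :=
  Disjoint A B ∧ ¬ IsPairedDomSet G A ∧ ¬ IsPairedDomSet G B ∧ IsPairedDomSet G (A ∪ B)

variable [Fintype V] [DecidableEq V]

/-- `π` is a paired coalition partition of `G`: no part is a paired dominating set and every
part forms a paired coalition with some other part. -/
def IsPCPartition (G : SimpleGraph V) (π : Finpartition (Finset.univ : Finset V)) : Prop :=
  ∀ A ∈ π.parts, ¬ IsPairedDomSet G (A : Set V) ∧
    ∃ B ∈ π.parts, B ≠ A ∧ PairedCoalition G (A : Set V) (B : Set V)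

/-- The paired coalition number: the maximum number of parts of a pc-partition of `G`,
and `0` if `G` admits no pc-partition. -/
noncomputable def pcNumber (G : SimpleGraph V) : ℕ :=
  sSup {k | ∃ π : Finpartition (Finset.univ : Finset V), IsPCPartition G π ∧ π.parts.card = k}

/-- The paired coalition graph of a partition `π` of `G`: vertices are the parts of `π`,
two parts being adjacent iff they form a paired coalition in `G`. -/
def PCG (G : SimpleGraph V) (π : Finpartition (Finset.univ : Finset V)) :
    SimpleGraph {A : Finset V // A ∈ π.parts} where
  Adj A B := PairedCoalition G ((A : Finset V) : Set V) ((B : Finset V) : Set V)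
  symm := by
    constructor
    rintro A B ⟨h1, h2, h3, h4⟩
    exact ⟨h1.symm, h3, h2, by rwa [Set.union_comm]⟩
  loopless := by
    constructor
    rintro A ⟨h1, h2, h3, h4⟩
    exact h2 (by rwa [Set.union_self] at h4)

end PCPaper

/-!
A singleton never carries a perfect matching, so a pc-partition with `n` parts is the partition
into singletons, and that is one exactly when every vertex `v` has a neighbour `w` with `{v, w}`
dominating. In a star every leaf pairs with the centre. Conversely, take such an edge `vw` in a
tree and suppose `a` is not adjacent to `w` and `c` not adjacent to `v`, so that `a ∼ v` and
`c ∼ w`. The partner `b` of `a` must be adjacent to `w`, so `b` and `v` are common neighbours of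
`a` and `w`, whence `b = v` (a tree has no 4-cycle); then `{a, v}` dominates `c` only through an
edge `ac`, closing the 4-cycle `v a c w`. So `v` or `w` is adjacent to all other vertices, and a
triangle-free graph with such a vertex is a star.
-/

namespace Finpartition

variable {α : Type*} [DecidableEq α] {s : Finset α}

lemma eq_bot_of_card_parts_eq (P : Finpartition s) (h : P.parts.card = s.card) : P = ⊥ := by
  have hone : ∀ t ∈ P.parts, t.card = 1 := by
    refine fun t ht => ((Finset.sum_eq_sum_iff_of_le (f := fun _ => 1)
      fun t ht => (P.nonempty_of_mem_parts ht).card_pos).mp ?_ t ht).symm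
    rw [P.sum_card_parts, Finset.sum_const, smul_eq_mul, mul_one, h]
  ext1
  refine Finset.eq_of_subset_of_card_le (fun t ht => ?_) (by rw [card_bot, h])
  obtain ⟨a, rfl⟩ := Finset.card_eq_one.mp (hone t ht)
  exact mem_bot_iff.mpr ⟨a, P.le ht (Finset.mem_singleton_self a), rfl⟩

end Finpartition

namespace SimpleGraph

variable {V : Type*} {G : SimpleGraph V}

lemma IsAcyclic.commonNeighbors_subsingleton (hG : G.IsAcyclic) {a c : V} (hac : a ≠ c) :
    (G.commonNeighbors a c).Subsingleton := by
  rintro b ⟨hab : G.Adj a b, hcb : G.Adj c b⟩ d ⟨had : G.Adj a d, hcd : G.Adj c d⟩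
  have hp : (Walk.cons hab (Walk.cons hcb.symm Walk.nil)).IsPath := by
    simp [hab.ne, hcb.ne', hac]
  have hq : (Walk.cons had (Walk.cons hcd.symm Walk.nil)).IsPath := by
    simp [had.ne, hcd.ne', hac]
  have hpq := congrArg (fun p : G.Path a c => p.1.support)
    ((hG.subsingleton_path a c).elim ⟨_, hp⟩ ⟨_, hq⟩)
  simpa using hpq

lemma IsAcyclic.nonempty_iso_star [Fintype V] [DecidableEq V] (hG : G.IsAcyclic) {u : V}
    (hu : ∀ x, x ≠ u → G.Adj u x) :
    Nonempty (G ≃g completeBipartiteGraph (Fin 1) (Fin (Fintype.card V - 1))) := by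
  have hleaves : ∀ x y, x ≠ u → y ≠ u → ¬ G.Adj x y := fun x y hx hy hxy =>
    hG.cliqueFree le_rfl {u, x, y} (is3Clique_triple_iff.mpr ⟨hu x hx, hu y hy, hxy⟩)
  let e : completeBipartiteGraph {x // x = u} {x // ¬ x = u} ≃g G :=
    { Equiv.sumCompl (· = u) with
      map_rel_iff' := by
        rintro (⟨x, rfl⟩ | ⟨x, hx⟩) (⟨y, rfl⟩ | ⟨y, hy⟩)
        · simp
        · simpa using hu y hy
        · simpa using (hu x hx).symm
        · simpa using hleaves x y hx hy }
  have hcenter : Fintype.card {x // x = u} = 1 := Fintype.card_subtype_eq u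
  have hleaf : Fintype.card {x // ¬ x = u} = Fintype.card V - 1 := by
    rw [Fintype.card_subtype_compl, hcenter]
  exact ⟨e.symm.trans (completeBipartiteGraphCongr (Fintype.equivFinOfCardEq hcenter)
    (Fintype.equivFinOfCardEq hleaf))⟩

lemma Iso.adj_symm_inl {β : Type*} (f : G ≃g completeBipartiteGraph (Fin 1) β) (x : V)
    (hx : x ≠ f.symm (.inl 0)) : G.Adj (f.symm (.inl 0)) x := by
  rw [← f.map_rel_iff, RelIso.apply_symm_apply]
  rcases hfx : f x with i | b
  · exact absurd (f.injective (by rw [hfx, RelIso.apply_symm_apply, Fin.fin_one_eq_zero i])) hx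
  · simp

end SimpleGraph

namespace PCPaper

variable {V : Type*} {G : SimpleGraph V}

lemma IsDomSet.mono {S T : Set V} (hS : IsDomSet G S) (hST : S ⊆ T) : IsDomSet G T :=
  fun v => (hS v).imp (@hST v) fun ⟨u, hu, huv⟩ => ⟨u, hST hu, huv⟩

lemma isDomSet_singleton_iff {u : V} : IsDomSet G {u} ↔ ∀ x, x ≠ u → G.Adj u x := by
  simp [IsDomSet, or_iff_not_imp_left]

lemma IsDomSet.adj_or_adj_of_ne {v w x : V} (h : IsDomSet G {v, w}) (hv : x ≠ v) (hw : x ≠ w) :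
    G.Adj v x ∨ G.Adj w x := by
  simpa [hv, hw] using h x

lemma not_isPairedDomSet_singleton (v : V) : ¬ IsPairedDomSet G {v} := by
  rintro ⟨-, M, hMv, hM⟩
  obtain ⟨w, hw, -⟩ := hM (show v ∈ M.verts by simp [hMv])
  have hwv : w = v := by simpa [hMv] using hw.snd_mem
  exact (M.adj_sub hw).ne hwv.symm

lemma isPairedDomSet_pair_iff {v w : V} :
    IsPairedDomSet G {v, w} ↔ G.Adj v w ∧ IsDomSet G {v, w} := by
  refine ⟨fun ⟨hdom, M, hMv, hM⟩ => ⟨?_, hdom⟩, fun ⟨hadj, hdom⟩ =>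
    ⟨hdom, G.subgraphOfAdj hadj, rfl, .subgraphOfAdj hadj⟩⟩
  obtain ⟨x, hx, -⟩ := hM (show v ∈ M.verts by simp [hMv])
  have hxvw : x = v ∨ x = w := by simpa [hMv] using hx.snd_mem
  rcases hxvw with rfl | rfl
  · exact absurd (M.adj_sub hx) (G.loopless.irrefl _)
  · exact M.adj_sub hx

lemma pairedCoalition_singleton_singleton_iff {v w : V} :
    PairedCoalition G {v} {w} ↔ G.Adj v w ∧ IsDomSet G {v, w} := by
  rw [PairedCoalition, Set.singleton_union, isPairedDomSet_pair_iff]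
  exact ⟨fun h => h.2.2.2, fun h => ⟨Set.disjoint_singleton.mpr h.1.ne,
    not_isPairedDomSet_singleton v, not_isPairedDomSet_singleton w, h⟩⟩

lemma exists_adj_isDomSet_pair_of_isDomSet_singleton [Nontrivial V] {u : V}
    (hu : IsDomSet G {u}) (v : V) : ∃ w, G.Adj v w ∧ IsDomSet G {v, w} := by
  rcases eq_or_ne v u with rfl | hvu
  · obtain ⟨w, hw⟩ := exists_ne v
    exact ⟨w, isDomSet_singleton_iff.mp hu w hw, hu.mono (by simp)⟩
  · exact ⟨u, (isDomSet_singleton_iff.mp hu v hvu).symm, hu.mono (by simp)⟩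

lemma exists_isDomSet_singleton_of_isAcyclic [Nonempty V] (hG : G.IsAcyclic)
    (h : ∀ v, ∃ w, G.Adj v w ∧ IsDomSet G {v, w}) : ∃ u, IsDomSet G {u} := by
  simp only [isDomSet_singleton_iff]
  obtain ⟨v⟩ := ‹Nonempty V›
  obtain ⟨w, hvw, hdom⟩ := h v
  by_contra! hnot
  obtain ⟨a, haw, hwa⟩ := hnot w
  obtain ⟨c, hcv, hvc⟩ := hnot v
  have hva : G.Adj v a :=
    (hdom.adj_or_adj_of_ne (by rintro rfl; exact hwa hvw.symm) haw).resolve_right hwa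
  have hwc : G.Adj w c :=
    (hdom.adj_or_adj_of_ne hcv (by rintro rfl; exact hvc hvw)).resolve_left hvc
  obtain ⟨b, hab, hdom'⟩ := h a
  have hbw : G.Adj b w :=
    (hdom'.adj_or_adj_of_ne haw.symm (by rintro rfl; exact hwa hab.symm)).resolve_left
      (fun h => hwa h.symm)
  obtain rfl : b = v :=
    hG.commonNeighbors_subsingleton haw ⟨hab, hbw.symm⟩ ⟨hva.symm, hvw.symm⟩
  have hac : G.Adj a c :=
    (hdom'.adj_or_adj_of_ne (by rintro rfl; exact hvc hva) hcv).resolve_right hvc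
  exact haw (hG.commonNeighbors_subsingleton hcv.symm ⟨hva, hac.symm⟩ ⟨hvw, hwc.symm⟩)

variable [Fintype V] [DecidableEq V]

lemma pcNumber_eq_card_iff [Nonempty V] : pcNumber G = Fintype.card V ↔ IsPCPartition G ⊥ := by
  set S := {k | ∃ π : Finpartition (Finset.univ : Finset V), IsPCPartition G π ∧ π.parts.card = k}
  have hle : ∀ k ∈ S, k ≤ Fintype.card V := by
    rintro k ⟨π, -, rfl⟩
    exact π.card_parts_le_card
  constructor
  · intro h
    have hne : S.Nonempty := by
      by_contra! hS
      have h0 : pcNumber G = 0 := by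
        change sSup S = 0
        rw [hS, csSup_empty, bot_eq_zero]
      exact Fintype.card_ne_zero (h.symm.trans h0)
    obtain ⟨π, hπ, hcard⟩ : Fintype.card V ∈ S := h ▸ Nat.sSup_mem hne ⟨_, hle⟩
    rwa [← π.eq_bot_of_card_parts_eq hcard]
  · intro h
    have hmem : Fintype.card V ∈ S := ⟨⊥, h, Finpartition.card_bot _⟩
    exact le_antisymm (csSup_le ⟨_, hmem⟩ hle) (le_csSup ⟨_, hle⟩ hmem)

lemma isPCPartition_bot_iff : IsPCPartition G ⊥ ↔ ∀ v, ∃ w, G.Adj v w ∧ IsDomSet G {v, w} := by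
  have hsingleton (v : V) : ({v} : Finset V) ∈ (⊥ : Finpartition Finset.univ).parts :=
    Finpartition.mem_bot_iff.mpr ⟨v, Finset.mem_univ v, rfl⟩
  constructor
  · intro h v
    obtain ⟨-, B, hB, -, hco⟩ := h {v} (hsingleton v)
    obtain ⟨w, -, rfl⟩ := Finpartition.mem_bot_iff.mp hB
    rw [Finset.coe_singleton, Finset.coe_singleton, pairedCoalition_singleton_singleton_iff] at hco
    exact ⟨w, hco⟩
  · intro h A hA
    obtain ⟨v, -, rfl⟩ := Finpartition.mem_bot_iff.mp hA
    obtain ⟨w, hco⟩ := h v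
    rw [Finset.coe_singleton]
    refine ⟨not_isPairedDomSet_singleton v, {w}, hsingleton w, by simpa using hco.1.ne', ?_⟩
    rwa [Finset.coe_singleton, pairedCoalition_singleton_singleton_iff]

end PCPaper

open PCPaper in
/-- For a tree `T` of order `n ≥ 2`, `PC(T) = n` iff `T` is a star `K_{1,n-1}`. -/
theorem stmt_14 {V : Type*} [Fintype V] [DecidableEq V] (T : SimpleGraph V)
    (hT : T.IsTree) (n : ℕ) (hn : Fintype.card V = n) (h2 : 2 ≤ n) :
    pcNumber T = n ↔ Nonempty (T ≃g completeBipartiteGraph (Fin 1) (Fin (n - 1))) := by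
  subst hn
  have : Nontrivial V := Fintype.one_lt_card_iff_nontrivial.mp h2
  rw [pcNumber_eq_card_iff, isPCPartition_bot_iff]
  constructor
  · intro h
    obtain ⟨u, hu⟩ := exists_isDomSet_singleton_of_isAcyclic hT.isAcyclic h
    exact hT.isAcyclic.nonempty_iso_star (isDomSet_singleton_iff.mp hu)
  · rintro ⟨f⟩
    exact exists_adj_isDomSet_pair_of_isDomSet_singleton
      (isDomSet_singleton_iff.mpr f.adj_symm_inl)
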